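/- Suppose m ≥ 2 and g is odd with g ≥ 2m+3. Let ρ assign weight −1 to each of ω_0,…,ω_{g−2} and weight g−1 to η. Then every monomial basis of U_m has ρ-weight at least (g−1)·((m−1)(g−1) − (2m²−2m+1)), which is at least (g−1)(2m−3) > 0. (The 'only if' direction of Theorem 6.1: the m-th Hilbert point of the canonically embedded rosary of odd genus is non-semistable when g ≥ 2m+3.) -/

import Mathlib

/-!
The 'only if' direction of Theorem 6.1: for the canonically embedded rosary of odd
genus `g ≥ 2m+3` (`m ≥ 2`), with the weight vector `ρ` assigning `-1` to each
`ω₀,…,ω_{g-2}` and `g-1` to `η`, every monomial basis of `U_m` has ρ-weight at least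
`(g-1)·((m-1)(g-1) − (2m²−2m+1))`, which is at least `(g-1)(2m-3) > 0`.
-/

noncomputable section

/-- The product ring `P = ∏_{i ∈ ℤ/(g-1)} ℂ(u)`. -/
abbrev Pro (g : ℕ) : Type := ZMod (g - 1) → RatFunc ℂ

/-- `ω_i := e_i + u^(-2)·e_(i+1)`. -/
def omegaR (g : ℕ) (i : ZMod (g - 1)) : Pro g :=
  Pi.single i 1 + Pi.single (i + 1) (RatFunc.X ^ (-2 : ℤ))

/-- `η := Σ_i u^(-1)·e_i`, i.e. the constant tuple `u^(-1)`. -/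
def etaR (g : ℕ) : Pro g := fun _ => RatFunc.X ^ (-1 : ℤ)

/-- Index type for the `g` canonical variables `ω₀,…,ω_{g-2}, η`. -/
abbrev CIdx (g : ℕ) : Type := ZMod (g - 1) ⊕ Unit

/-- The canonical variables. -/
def varC (g : ℕ) : CIdx g → Pro g :=
  Sum.elim (omegaR g) (fun _ => etaR g)

/-- `U_m`: the `ℂ`-span of all degree-`m` monomials in `ω₀,…,ω_{g-2}, η`. -/
def UC (g m : ℕ) : Submodule ℂ (Pro g) :=
  Submodule.span ℂ
    {p : Pro g | ∃ σ : Multiset (CIdx g), Multiset.card σ = m ∧ p = (σ.map (varC g)).prod}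

/-- Degree-`m` canonical monomials, as multisets of `m` variable indices. -/
abbrev CMon (g m : ℕ) := Sym (CIdx g) m

/-- A finite set of degree-`m` canonical monomials is a monomial basis of `U_m` if its
images in `P` are linearly independent over `ℂ` and span `U_m`. -/
def IsMonBasisC (g m : ℕ) (S : Finset (CMon g m)) : Prop :=
  LinearIndependent ℂ (fun s : S => (((s : CMon g m)).1.map (varC g)).prod) ∧
  Submodule.span ℂ ((fun s : CMon g m => (s.1.map (varC g)).prod) '' S) = UC g m

/-- The destabilizing weight vector: `-1` on each `ω_i` and `g-1` on `η`. -/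
def rhoDest (g : ℕ) : CIdx g → ℤ :=
  Sum.elim (fun _ => -1) (fun _ => (g : ℤ) - 1)

/-!
On component `i` the only degree-`m` monomials that do not vanish are the
`ω_{i-1}^b ω_i^a η^k`, equal to `u^{-(2b+k)}`, so `U_m` consists of tuples of Laurent
polynomials with pole orders in `[0, 2m]`. For elements of `U_m` the coefficients of the pole
orders `2m - 1` and `2m` on component `i + 1` repeat those of the orders `1` and `0` on
component `i`, so `dim U_m ≤ (g - 1)(2m - 1)`, which bounds `|S|`. On the other hand the parity
of the pole order is the parity of the `η`-degree, and the coefficients of the odd pole orders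
`1, 3, …, 2m - 3` are independent on `U_m`; hence at least `(g - 1)(m - 1)` members of `S` have
odd, so positive, `η`-degree. A monomial of `η`-degree `k` has weight `gk - m`, and the two
counts give the bound.
-/

open scoped LaurentSeries RatFunc Finset

namespace RatFunc

variable {F : Type*} [Field F]

def laurentCoeff (n : ℤ) : RatFunc F →ₗ[F] F where
  toFun q := (q : F⸨X⸩).coeff n
  map_add' p q := by simp
  map_smul' c q := by
    rw [Algebra.smul_def, IsScalarTower.algebraMap_apply F (Polynomial F) (RatFunc F), map_mul,
      ← IsScalarTower.algebraMap_apply (Polynomial F) (RatFunc F) F⸨X⸩]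
    simp

theorem laurentCoeff_X_inv_pow (n : ℤ) (k : ℕ) :
    laurentCoeff n ((X : RatFunc F)⁻¹ ^ k) = if n = -(k : ℤ) then 1 else 0 := by
  rw [inv_pow, ← zpow_natCast, ← zpow_neg]
  show ((X ^ (-(k : ℤ)) : RatFunc F) : F⸨X⸩).coeff n = _
  rw [map_zpow₀, coe_X, ← single_zpow, HahnSeries.coeff_single]
  congr

theorem eq_zero_of_forall_laurentCoeff_eq_zero {q : RatFunc F}
    (h : ∀ n, laurentCoeff n q = 0) : q = 0 :=
  (FaithfulSMul.algebraMap_injective (RatFunc F) F⸨X⸩).eq_iff.mp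
    (by ext n; rw [map_zero]; exact h n)

end RatFunc

theorem ZMod.natCast_ne_zero_of_pos_of_lt {n k : ℕ} (hk : 0 < k) (hkn : k < n) :
    (k : ZMod n) ≠ 0 := by
  rw [Ne, ZMod.natCast_eq_zero_iff]
  exact Nat.not_dvd_of_pos_of_lt hk hkn

theorem Multiset.card_eq_count_add_count_add_count {α : Type*} [DecidableEq α] {a b c : α}
    (hab : a ≠ b) (hac : a ≠ c) (hbc : b ≠ c) {σ : Multiset α}
    (h : ∀ x ∈ σ, x = a ∨ x = b ∨ x = c) : card σ = count a σ + count b σ + count c σ := by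
  rw [← Multiset.sum_count_eq_card (s := {a, b, c}) (by simpa using h)]
  rw [Finset.sum_insert (by simp [hab, hac]), Finset.sum_pair hbc, add_assoc]

theorem Finset.card_filter_odd_le_sum {ι : Type*} (s : Finset ι) (f : ι → ℕ) :
    #(s.filter fun i => Odd (f i)) ≤ ∑ i ∈ s, f i := by
  rw [Finset.card_eq_sum_ones, Finset.sum_filter]
  exact Finset.sum_le_sum fun i _ => by split_ifs with h <;> [exact h.pos; exact Nat.zero_le _]

namespace Rosary

open Multiset RatFunc

variable {g : ℕ}

def monomial (g : ℕ) (σ : Multiset (CIdx g)) : Pro g := (σ.map (varC g)).prod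

def SupportedAt (i : ZMod (g - 1)) (σ : Multiset (CIdx g)) : Prop :=
  ∀ x ∈ σ, x = .inl (i - 1) ∨ x = .inl i ∨ x = .inr ()

instance (i : ZMod (g - 1)) (σ : Multiset (CIdx g)) : Decidable (SupportedAt i σ) := by
  unfold SupportedAt; infer_instance

def poleOrderAt (i : ZMod (g - 1)) (σ : Multiset (CIdx g)) : ℕ :=
  2 * σ.count (.inl (i - 1)) + σ.count (.inr ())

theorem varC_apply_of_supportedAt (h1 : (1 : ZMod (g - 1)) ≠ 0) {i : ZMod (g - 1)} {x : CIdx g}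
    (hx : SupportedAt i {x}) : varC g x i = X⁻¹ ^ poleOrderAt i {x} := by
  have hne : i - 1 ≠ i := sub_eq_self.not.mpr h1
  rcases hx x (mem_singleton_self x) with rfl | rfl | rfl
  · simp [varC, omegaR, poleOrderAt, hne.symm]
  · simp [varC, omegaR, poleOrderAt, hne, h1]
  · simp [varC, etaR, poleOrderAt]

theorem varC_apply_of_not_supportedAt {i : ZMod (g - 1)} {x : CIdx g}
    (hx : ¬SupportedAt i {x}) : varC g x i = 0 := by
  simp only [SupportedAt, mem_singleton, forall_eq] at hx
  rcases x with j | ⟨⟩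
  · have hj : i ≠ j + 1 := fun h => hx (.inl (congrArg Sum.inl (by rw [h]; ring)))
    simp_all [varC, omegaR, eq_comm]
  · simp at hx

theorem supportedAt_cons {i : ZMod (g - 1)} {x : CIdx g} {s : Multiset (CIdx g)} :
    SupportedAt i (x ::ₘ s) ↔ SupportedAt i {x} ∧ SupportedAt i s := by
  simp [SupportedAt]

theorem poleOrderAt_cons (i : ZMod (g - 1)) (x : CIdx g) (s : Multiset (CIdx g)) :
    poleOrderAt i (x ::ₘ s) = poleOrderAt i {x} + poleOrderAt i s := by
  simp only [poleOrderAt, ← singleton_add, count_add]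
  ring

theorem monomial_cons (x : CIdx g) (s : Multiset (CIdx g)) :
    monomial g (x ::ₘ s) = varC g x * monomial g s := by
  simp [monomial]

theorem monomial_apply (h1 : (1 : ZMod (g - 1)) ≠ 0) (i : ZMod (g - 1)) (σ : Multiset (CIdx g)) :
    monomial g σ i = if SupportedAt i σ then X⁻¹ ^ poleOrderAt i σ else 0 := by
  induction σ using Multiset.induction_on with
  | empty => simp [monomial, SupportedAt, poleOrderAt]
  | cons x s ih =>
    rw [monomial_cons, Pi.mul_apply, ih, poleOrderAt_cons]
    by_cases hx : SupportedAt i {x}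
    · simp only [varC_apply_of_supportedAt h1 hx, supportedAt_cons, hx, true_and]
      split_ifs <;> simp [pow_add]
    · simp [varC_apply_of_not_supportedAt hx, supportedAt_cons, hx]

theorem card_eq_of_supportedAt (h1 : (1 : ZMod (g - 1)) ≠ 0) {i : ZMod (g - 1)}
    {σ : Multiset (CIdx g)} (h : SupportedAt i σ) :
    card σ = count (.inl (i - 1)) σ + count (.inl i) σ + count (.inr ()) σ :=
  card_eq_count_add_count_add_count (by simpa using h1) (by simp) (by simp) h

theorem poleOrderAt_le (h1 : (1 : ZMod (g - 1)) ≠ 0) {i : ZMod (g - 1)} {σ : Multiset (CIdx g)}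
    (h : SupportedAt i σ) : poleOrderAt i σ ≤ 2 * card σ := by
  have := card_eq_of_supportedAt h1 h
  unfold poleOrderAt
  omega

theorem supportedAt_add_one_and_iff (h1 : (1 : ZMod (g - 1)) ≠ 0) {e : ℕ} (he : e ≤ 1)
    (i : ZMod (g - 1)) (σ : Multiset (CIdx g)) :
    SupportedAt (i + 1) σ ∧ poleOrderAt (i + 1) σ + e = 2 * card σ ↔
      SupportedAt i σ ∧ poleOrderAt i σ = e := by
  have hi : i + 1 - 1 = i := add_sub_cancel_right i 1
  have hne : i - 1 ≠ i := sub_eq_self.not.mpr h1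
  constructor
  · rintro ⟨hs, hexp⟩
    have hcard := card_eq_of_supportedAt h1 hs
    simp only [poleOrderAt, hi] at hcard hexp
    have hnext : Sum.inl (i + 1) ∉ σ := count_eq_zero.mp (by omega)
    have hσ : ∀ x ∈ σ, x = .inl i ∨ x = .inr () := by
      intro x hx
      rcases hs x hx with h | h | h
      · exact .inl (hi ▸ h)
      · exact absurd (h ▸ hx) hnext
      · exact .inr h
    have hprev : count (.inl (i - 1)) σ = 0 := count_eq_zero.mpr fun hx => by
      rcases hσ _ hx with h | h <;> simp_all
    refine ⟨fun x hx => (hσ x hx).elim (.inr ∘ .inl) (.inr ∘ .inr), ?_⟩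
    unfold poleOrderAt
    omega
  · rintro ⟨hs, hexp⟩
    have hcard := card_eq_of_supportedAt h1 hs
    unfold poleOrderAt at hexp
    have hprev : Sum.inl (i - 1) ∉ σ := count_eq_zero.mp (by omega)
    refine ⟨fun x hx => ?_, ?_⟩
    · rcases hs x hx with h | h | h
      · exact absurd (h ▸ hx) hprev
      · exact .inl (hi.symm ▸ h)
      · exact .inr (.inr h)
    · simp only [poleOrderAt, hi]
      omega

def coeffAt (g : ℕ) (i : ZMod (g - 1)) (n : ℤ) : Pro g →ₗ[ℂ] ℂ :=
  (laurentCoeff n).comp (LinearMap.proj i)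

theorem coeffAt_monomial (h1 : (1 : ZMod (g - 1)) ≠ 0) (i : ZMod (g - 1)) (n : ℤ)
    (σ : Multiset (CIdx g)) :
    coeffAt g i n (monomial g σ) =
      if SupportedAt i σ ∧ n = -(poleOrderAt i σ : ℤ) then 1 else 0 := by
  simp only [coeffAt, LinearMap.comp_apply, LinearMap.proj_apply, monomial_apply h1]
  by_cases hs : SupportedAt i σ
  · simp only [hs, if_true, true_and, laurentCoeff_X_inv_pow]
  · simp only [hs, if_false, false_and, LinearMap.map_zero]

theorem coeffAt_monomial_eq_zero_of_lt_or_lt (h1 : (1 : ZMod (g - 1)) ≠ 0) (i : ZMod (g - 1))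
    {n : ℤ} {σ : Multiset (CIdx g)} (hn : 0 < n ∨ n < -(2 * card σ : ℤ)) :
    coeffAt g i n (monomial g σ) = 0 := by
  rw [coeffAt_monomial h1, if_neg]
  rintro ⟨hs, rfl⟩
  have := poleOrderAt_le h1 hs
  omega

theorem coeffAt_add_one_monomial (h1 : (1 : ZMod (g - 1)) ≠ 0) {e m : ℕ} (he : e ≤ 1)
    (i : ZMod (g - 1)) {σ : Multiset (CIdx g)} (hσ : card σ = m) :
    coeffAt g (i + 1) (e - 2 * m) (monomial g σ) = coeffAt g i (-e) (monomial g σ) := by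
  simp only [coeffAt_monomial h1]
  refine if_congr ?_ rfl rfl
  subst hσ
  refine (and_congr_right fun _ => ?_).trans
    ((supportedAt_add_one_and_iff h1 he i σ).trans (and_congr_right fun _ => ?_)) <;> omega

theorem coeffAt_monomial_eq_zero_of_even (h1 : (1 : ZMod (g - 1)) ≠ 0) (i : ZMod (g - 1))
    (t : ℕ) {σ : Multiset (CIdx g)} (hσ : Even (count (.inr ()) σ)) :
    coeffAt g i (-(2 * t + 1)) (monomial g σ) = 0 := by
  rw [coeffAt_monomial h1, if_neg]
  rintro ⟨-, h⟩
  obtain ⟨k, hk⟩ := hσ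
  unfold poleOrderAt at h
  omega

theorem map_eq_zero_of_mem_UC {m : ℕ} {M : Type*} [AddCommMonoid M] [Module ℂ M]
    (f : Pro g →ₗ[ℂ] M) (hf : ∀ σ : Multiset (CIdx g), card σ = m → f (monomial g σ) = 0)
    {p : Pro g} (hp : p ∈ UC g m) : f p = 0 :=
  (Submodule.span_le (p := LinearMap.ker f)).2 (by rintro _ ⟨σ, hσ, rfl⟩; exact hf σ hσ) hp

theorem coeffAt_eq_zero_of_mem_UC (h1 : (1 : ZMod (g - 1)) ≠ 0) {m : ℕ} (i : ZMod (g - 1))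
    {n : ℤ} (hn : 0 < n ∨ n < -(2 * m : ℤ)) {p : Pro g} (hp : p ∈ UC g m) :
    coeffAt g i n p = 0 :=
  map_eq_zero_of_mem_UC _ (fun _ hσ => coeffAt_monomial_eq_zero_of_lt_or_lt h1 i (hσ ▸ hn)) hp

theorem coeffAt_add_one_of_mem_UC (h1 : (1 : ZMod (g - 1)) ≠ 0) {e m : ℕ} (he : e ≤ 1)
    (i : ZMod (g - 1)) {p : Pro g} (hp : p ∈ UC g m) :
    coeffAt g (i + 1) (e - 2 * m) p = coeffAt g i (-e) p :=
  sub_eq_zero.mp <| map_eq_zero_of_mem_UC (coeffAt g (i + 1) (e - 2 * m) - coeffAt g i (-e))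
    (fun _ hσ => sub_eq_zero.mpr (coeffAt_add_one_monomial h1 he i hσ)) hp

def lowCoeffs (g m : ℕ) : Pro g →ₗ[ℂ] (ZMod (g - 1) × Fin (2 * m - 1) → ℂ) :=
  LinearMap.pi fun j => coeffAt g j.1 (-(j.2 : ℤ))

theorem eq_zero_of_mem_UC_of_lowCoeffs_eq_zero (h1 : (1 : ZMod (g - 1)) ≠ 0) {m : ℕ}
    (hm : 2 ≤ m) {p : Pro g} (hp : p ∈ UC g m) (h : lowCoeffs g m p = 0) : p = 0 := by
  have hlow (i : ZMod (g - 1)) (e : ℕ) (he : e < 2 * m - 1) : coeffAt g i (-e) p = 0 :=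
    congrFun h (i, ⟨e, he⟩)
  funext i
  refine eq_zero_of_forall_laurentCoeff_eq_zero fun n => ?_
  change coeffAt g i n p = 0
  by_cases hout : 0 < n ∨ n < -(2 * m : ℤ)
  · exact coeffAt_eq_zero_of_mem_UC h1 i hout hp
  obtain ⟨e, rfl⟩ : ∃ e : ℕ, n = -e := ⟨n.natAbs, by omega⟩
  rcases lt_or_ge e (2 * m - 1) with he | he
  · exact hlow i e he
  -- the two top coefficients on component `i` repeat the two bottom ones on component `i - 1`
  have htie := coeffAt_add_one_of_mem_UC h1 (e := 2 * m - e) (by omega) (i - 1) hp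
  rw [sub_add_cancel, hlow (i - 1) _ (by omega)] at htie
  rwa [show -(e : ℤ) = ((2 * m - e : ℕ) : ℤ) - 2 * m by omega]

theorem card_le_of_linearIndependent [NeZero (g - 1)] (h1 : (1 : ZMod (g - 1)) ≠ 0) {m : ℕ}
    (hm : 2 ≤ m) {ι : Type*} [Fintype ι] {v : ι → Pro g} (hv : LinearIndependent ℂ v)
    (hvU : ∀ j, v j ∈ UC g m) : Fintype.card ι ≤ (g - 1) * (2 * m - 1) := by
  have hdisj : Disjoint (Submodule.span ℂ (Set.range v)) (LinearMap.ker (lowCoeffs g m)) := by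
    refine Submodule.disjoint_def.mpr fun p hp hker => ?_
    exact eq_zero_of_mem_UC_of_lowCoeffs_eq_zero h1 hm
      (Submodule.span_le.mpr (Set.range_subset_iff.mpr hvU) hp) hker
  simpa [Module.finrank_pi] using (hv.map hdisj).fintype_card_le_finrank

def oddCoeffs (g m : ℕ) : Pro g →ₗ[ℂ] (ZMod (g - 1) × Fin (m - 1) → ℂ) :=
  LinearMap.pi fun j => coeffAt g j.1 (-(2 * (j.2 : ℤ) + 1))

theorem oddCoeffs_monomial_of_even (h1 : (1 : ZMod (g - 1)) ≠ 0) (m : ℕ)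
    {σ : Multiset (CIdx g)} (hσ : Even (count (.inr ()) σ)) :
    oddCoeffs g m (monomial g σ) = 0 :=
  funext fun j => coeffAt_monomial_eq_zero_of_even h1 j.1 j.2 hσ

/-- `ω_{i-1}^t ω_i^(m-1-t) η`: for `t ≤ m - 2`, its only odd pole of order at most `2m - 3`
is the pole of order `2t + 1` on component `i`. -/
def oddWitness (m : ℕ) (i : ZMod (g - 1)) (t : ℕ) : Multiset (CIdx g) :=
  replicate t (.inl (i - 1)) + replicate (m - 1 - t) (.inl i) + {.inr ()}

theorem card_oddWitness {m t : ℕ} (ht : t < m) (i : ZMod (g - 1)) :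
    card (oddWitness m i t) = m := by
  simp [oddWitness]
  omega

theorem supportedAt_oddWitness_and_iff (h1 : (1 : ZMod (g - 1)) ≠ 0)
    (h2 : (2 : ZMod (g - 1)) ≠ 0) {m t t' : ℕ} (ht : t + 2 ≤ m) (ht' : t' + 2 ≤ m)
    (i i' : ZMod (g - 1)) :
    SupportedAt i' (oddWitness m i t) ∧ poleOrderAt i' (oddWitness m i t) = 2 * t' + 1 ↔
      i' = i ∧ t' = t := by
  have hne : i - 1 ≠ i := sub_eq_self.not.mpr h1
  have hmem_self : Sum.inl i ∈ oddWitness m i t :=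
    mem_add.2 (.inl (mem_add.2 (.inr (mem_replicate.2 ⟨by omega, rfl⟩))))
  constructor
  · rintro ⟨hs, he⟩
    rcases hs _ hmem_self with h | h | h
    · obtain rfl : i' = i + 1 := by rw [Sum.inl.inj h]; ring
      rcases Nat.eq_zero_or_pos t with rfl | htpos
      · simp [poleOrderAt, oddWitness, count_replicate] at he
        omega
      · have hmem_prev : Sum.inl (i - 1) ∈ oddWitness m i t :=
          mem_add.2 (.inl (mem_add.2 (.inl (mem_replicate.2 ⟨by omega, rfl⟩))))
        rcases hs _ hmem_prev with h' | h' | h'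
        · rw [add_sub_cancel_right] at h'
          exact (hne (Sum.inl.inj h')).elim
        · exact absurd (Sum.inl.inj h') fun h'' => h2 (by linear_combination -h'')
        · simp at h'
    · obtain rfl := (Sum.inl.inj h).symm
      simp [poleOrderAt, oddWitness, count_replicate, hne.symm] at he
      exact ⟨rfl, by omega⟩
    · simp at h
  · rintro ⟨rfl, rfl⟩
    refine ⟨fun x hx => ?_, ?_⟩
    · simp only [oddWitness, mem_add, mem_replicate, mem_singleton] at hx
      tauto
    · simp [poleOrderAt, oddWitness, count_replicate, hne.symm]

theorem oddCoeffs_monomial_oddWitness (h1 : (1 : ZMod (g - 1)) ≠ 0)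
    (h2 : (2 : ZMod (g - 1)) ≠ 0) {m : ℕ} (j : ZMod (g - 1) × Fin (m - 1)) :
    oddCoeffs g m (monomial g (oddWitness m j.1 j.2)) = Pi.single j 1 := by
  funext j'
  simp only [oddCoeffs, LinearMap.pi_apply, coeffAt_monomial h1, Pi.single_apply]
  refine if_congr ?_ rfl rfl
  rw [Prod.ext_iff, Fin.ext_iff]
  convert supportedAt_oddWitness_and_iff h1 h2 (m := m) (t := j.2) (t' := j'.2)
    (by have := j.2.isLt; omega) (by have := j'.2.isLt; omega) j.1 j'.1 using 2
  omega

theorem le_card_filter_odd [NeZero (g - 1)] (h1 : (1 : ZMod (g - 1)) ≠ 0)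
    (h2 : (2 : ZMod (g - 1)) ≠ 0) {m : ℕ} (S : Finset (CMon g m))
    (hS : Submodule.span ℂ ((fun s : CMon g m => monomial g s.1) '' S) = UC g m) :
    (g - 1) * (m - 1) ≤ #(S.filter fun s => Odd (count (.inr ()) s.1)) := by
  set T := S.filter fun s => Odd (count (.inr ()) s.1)
  set f : CMon g m → (ZMod (g - 1) × Fin (m - 1) → ℂ) := fun s => oddCoeffs g m (monomial g s.1)
  set A : Set (ZMod (g - 1) × Fin (m - 1) → ℂ) := ↑(T.image f)
  -- the even monomials of `S` are killed by `oddCoeffs`, so the odd ones span its image of `U_m`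
  have hmap : (UC g m).map (oddCoeffs g m) ≤ Submodule.span ℂ A := by
    rw [← hS, Submodule.map_span, ← Set.image_comp, Submodule.span_le]
    rintro _ ⟨s, hs, rfl⟩
    by_cases hodd : Odd (count (.inr ()) s.1)
    · exact Submodule.subset_span (Finset.mem_coe.2 (Finset.mem_image_of_mem f
        (Finset.mem_filter.2 ⟨hs, hodd⟩)))
    · rw [Function.comp_apply, oddCoeffs_monomial_of_even h1 m (Nat.not_odd_iff_even.mp hodd)]
      exact Submodule.zero_mem _
  have htop : Submodule.span ℂ A = ⊤ := by
    refine eq_top_iff.2 (le_trans ?_ hmap)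
    rw [← (Pi.basisFun ℂ _).span_eq, Submodule.span_le]
    rintro _ ⟨j, rfl⟩
    rw [Pi.basisFun_apply, ← oddCoeffs_monomial_oddWitness h1 h2 j]
    exact Submodule.mem_map_of_mem
      (Submodule.subset_span ⟨_, card_oddWitness (by omega) j.1, rfl⟩)
  calc (g - 1) * (m - 1) = Set.finrank ℂ A := by rw [Set.finrank, htop, finrank_top]; simp
    _ ≤ #(T.image f) := finrank_span_finset_le_card _
    _ ≤ #T := Finset.card_image_le

theorem sum_map_rhoDest (σ : Multiset (CIdx g)) :
    (σ.map (rhoDest g)).sum = g * count (.inr ()) σ - card σ := by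
  induction σ using Multiset.induction_on with
  | empty => simp
  | cons x s ih =>
    rw [map_cons, sum_cons, ih, count_cons, card_cons]
    rcases x with j | ⟨⟩ <;> simp [rhoDest] <;> ring

theorem sum_sum_map_rhoDest {m : ℕ} (S : Finset (CMon g m)) :
    ∑ σ ∈ S, (σ.1.map (rhoDest g)).sum = g * ∑ σ ∈ S, (count (.inr ()) σ.1 : ℤ) - m * #S := by
  simp [sum_map_rhoDest, Finset.sum_sub_distrib, Finset.mul_sum, mul_comm]

end Rosary

open Multiset Rosary in
theorem rosary_canonical_nonsemistable_general (g m : ℕ) (hm : 2 ≤ m)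
    (hg : 2 * m + 3 ≤ g) (S : Finset (CMon g m)) (hS : IsMonBasisC g m S) :
    ((g : ℤ) - 1) * (((m : ℤ) - 1) * ((g : ℤ) - 1) - (2 * (m : ℤ) ^ 2 - 2 * m + 1)) ≤
        (∑ σ ∈ S, (σ.1.map (rhoDest g)).sum) ∧
    ((g : ℤ) - 1) * (2 * (m : ℤ) - 3) ≤
        ((g : ℤ) - 1) * (((m : ℤ) - 1) * ((g : ℤ) - 1) - (2 * (m : ℤ) ^ 2 - 2 * m + 1)) ∧
    0 < ((g : ℤ) - 1) * (2 * (m : ℤ) - 3) := by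
  have : NeZero (g - 1) := ⟨by omega⟩
  have h1 : (1 : ZMod (g - 1)) ≠ 0 := by
    simpa using ZMod.natCast_ne_zero_of_pos_of_lt (n := g - 1) one_pos (by omega)
  have h2 : (2 : ZMod (g - 1)) ≠ 0 := by
    simpa using ZMod.natCast_ne_zero_of_pos_of_lt (n := g - 1) two_pos (by omega)
  have hcard : #S ≤ (g - 1) * (2 * m - 1) := by
    simpa using card_le_of_linearIndependent h1 hm hS.1
      fun s => Submodule.subset_span ⟨s.1.1, s.1.2, rfl⟩
  have hη := (le_card_filter_odd h1 h2 S hS.2).trans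
    (Finset.card_filter_odd_le_sum S fun s => count (.inr ()) s.1)
  zify [(by omega : 1 ≤ g), (by omega : 1 ≤ m), (by omega : 1 ≤ 2 * m)] at hcard hη
  rw [sum_sum_map_rhoDest]
  refine ⟨by nlinarith, ?_, mul_pos (by omega) (by omega)⟩
  nlinarith [mul_nonneg (mul_nonneg (by omega : (0 : ℤ) ≤ g - 1) (by omega : (0 : ℤ) ≤ m - 1))
    (by omega : (0 : ℤ) ≤ g - 2 * m - 3)]

/-- The 'only if' direction of Theorem 6.1. -/
theorem rosary_canonical_nonsemistable (g m : ℕ) (hodd : Odd g) (hm : 2 ≤ m)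
    (hg : 2 * m + 3 ≤ g) (S : Finset (CMon g m)) (hS : IsMonBasisC g m S) :
    ((g : ℤ) - 1) * (((m : ℤ) - 1) * ((g : ℤ) - 1) - (2 * (m : ℤ) ^ 2 - 2 * m + 1)) ≤
        (∑ σ ∈ S, (σ.1.map (rhoDest g)).sum) ∧
    ((g : ℤ) - 1) * (2 * (m : ℤ) - 3) ≤
        ((g : ℤ) - 1) * (((m : ℤ) - 1) * ((g : ℤ) - 1) - (2 * (m : ℤ) ^ 2 - 2 * m + 1)) ∧
    0 < ((g : ℤ) - 1) * (2 * (m : ℤ) - 3) :=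
  rosary_canonical_nonsemistable_general g m hm hg S hS

end
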